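/- arXiv:1305.0134 — 4 statements merged into one kernel-verified Lean document; each statement's English description precedes it below -/
import Mathlib

section
/- Let P be a finite partially ordered set and f : P → P an order-preserving map that is monotone, i.e. either p ≤ f(p) for all p ∈ P, or f(p) ≤ p for all p ∈ P. Then |P| is homotopy equivalent to |fix(f)|, where fix(f) = {p ∈ P : f(p) = p} carries the order induced from P. -/
open Classical

/-- The geometric realization of (the order complex of) a finite poset `P`:
points are convex combinations of elements of `P` whose support is a chain,
topologized as a subspace of `P → ℝ`. -/
abbrev GeomReal (P : Type*) [Fintype P] [PartialOrder P] : Type _ :=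
  { f : P → ℝ // (∀ p, 0 ≤ f p) ∧ (∑ p, f p = 1) ∧ IsChain (· ≤ ·) {p | f p ≠ 0} }

/-!
A monotone map `a : P → Q` acts on `|P|` by pushing the weights of a point forward along `a`.
If `a ≤ b` pointwise, the two induced maps are homotopic: lay the weights of a point end to end
on `[0, 1]` in the order of its chain, and at time `t` send the part below level `t` along `a`
and the rest along `b`. Every element carrying the first part lies below every element carrying
the second, so the image is again supported on a chain.

Since `P` is finite, some iterate `r = f^[n]` of an inflationary (or deflationary) `f` takes
values in `fix f`. With the inclusion `i`, we have `r ∘ i = id` and `i ∘ r ≥ id` (or `≤ id`),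
so `r` and `i` induce mutually inverse homotopy equivalences.
-/

open Function Finset

namespace GeomReal

section Pushforward

variable {α β γ M : Type*} [Fintype α] [AddCommMonoid M]

noncomputable def pushforward (a : α → β) (x : α → M) : β → M :=
  fun b => ∑ p with a p = b, x p

lemma sum_pushforward [Fintype β] (a : α → β) (x : α → M) :
    ∑ b, pushforward a x b = ∑ p, x p :=
  sum_fiberwise univ a x

lemma pushforward_zero (a : α → β) : pushforward a (0 : α → M) = 0 := by
  ext; simp [pushforward]

lemma pushforward_id (x : α → M) : pushforward id x = x := by
  ext; simp [pushforward, sum_filter]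

lemma pushforward_pushforward [Fintype β] (a : α → β) (b : β → γ) (x : α → M) :
    pushforward b (pushforward a x) = pushforward (b ∘ a) x := by
  ext c
  exact (sum_fiberwise_eq_sum_filter univ {p | b p = c} a x).trans (by simp [pushforward])

lemma support_pushforward_subset (a : α → β) (x : α → M) :
    support (pushforward a x) ⊆ a '' support x := by
  intro b hb
  obtain ⟨p, hp, hxp⟩ := exists_ne_zero_of_sum_ne_zero hb
  exact ⟨p, hxp, (mem_filter.mp hp).2⟩

lemma pushforward_nonneg [PartialOrder M] [IsOrderedAddMonoid M] (a : α → β) {x : α → M}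
    (hx : 0 ≤ x) : 0 ≤ pushforward a x :=
  fun _ => sum_nonneg fun p _ => hx p

lemma continuous_pushforward [TopologicalSpace M] [ContinuousAdd M] (a : α → β) :
    Continuous (pushforward a : (α → M) → β → M) :=
  continuous_pi fun _ => continuous_finsetSum _ fun p _ => continuous_apply p

variable [Preorder α] [Preorder β]

lemma isChain_support_pushforward {a : α → β} (ha : Monotone a) {x : α → M}
    (hx : IsChain (· ≤ ·) (support x)) : IsChain (· ≤ ·) (support (pushforward a x)) :=
  (ha.isChain_image hx).mono (support_pushforward_subset a x)

lemma isChain_support_pushforward_add {a b : α → β} (ha : Monotone a) (hb : Monotone b)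
    {x y : α → M} (hx : IsChain (· ≤ ·) (support x)) (hy : IsChain (· ≤ ·) (support y))
    (hxy : ∀ p ∈ support x, ∀ p' ∈ support y, a p ≤ b p') :
    IsChain (· ≤ ·) (support (pushforward a x + pushforward b y)) := by
  refine IsChain.mono (support_add _ _) (isChain_union.mpr ⟨isChain_support_pushforward ha hx,
    isChain_support_pushforward hb hy, fun q hq q' hq' _ => Or.inl ?_⟩)
  obtain ⟨p, hp, rfl⟩ := support_pushforward_subset a x hq
  obtain ⟨p', hp', rfl⟩ := support_pushforward_subset b y hq'
  exact hxy p hp p' hp'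

end Pushforward

variable {P Q R : Type*} [Fintype P] [PartialOrder P]

noncomputable def cumulative (x : P → ℝ) (p : P) : ℝ :=
  ∑ p' with p' ≤ p, x p'

lemma le_cumulative {x : P → ℝ} (hx : ∀ p, 0 ≤ x p) (p : P) : x p ≤ cumulative x p :=
  single_le_sum (fun p' _ => hx p') (mem_filter.mpr ⟨mem_univ p, le_rfl⟩)

lemma cumulative_le_sum {x : P → ℝ} (hx : ∀ p, 0 ≤ x p) (p : P) : cumulative x p ≤ ∑ p', x p' :=
  sum_le_sum_of_subset_of_nonneg (filter_subset _ _) fun p' _ _ => hx p'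

lemma cumulative_le_sub_of_lt {x : P → ℝ} (hx : ∀ p, 0 ≤ x p) {p p' : P} (h : p' < p) :
    cumulative x p' ≤ cumulative x p - x p := by
  have hp : p ∈ univ.filter (· ≤ p) := mem_filter.mpr ⟨mem_univ p, le_rfl⟩
  unfold cumulative
  rw [← add_sum_erase _ x hp, add_sub_cancel_left]
  refine sum_le_sum_of_subset_of_nonneg (fun q hq => ?_) fun q _ _ => hx q
  have hq : q ≤ p' := (mem_filter.mp hq).2
  exact mem_erase.mpr ⟨(hq.trans_lt h).ne, mem_filter.mpr ⟨mem_univ q, hq.trans h.le⟩⟩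

/-- Laying the masses `x p` of a chain end to end in increasing order, `p` occupies the interval
`[cumulative x p - x p, cumulative x p]`; this is the length of its part below the level `s`. -/
noncomputable def massBelow (x : P → ℝ) (s : ℝ) (p : P) : ℝ :=
  min (cumulative x p) s - min (cumulative x p - x p) s

lemma massBelow_nonneg {x : P → ℝ} (hx : ∀ p, 0 ≤ x p) (s : ℝ) : 0 ≤ massBelow x s :=
  fun p => sub_nonneg.mpr (min_le_min_right s (sub_le_self _ (hx p)))

lemma massBelow_le {x : P → ℝ} (hx : ∀ p, 0 ≤ x p) (s : ℝ) : massBelow x s ≤ x := fun p => by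
  rw [massBelow, sub_le_iff_le_add']
  calc min (cumulative x p) s ≤ min (cumulative x p) (s + x p) :=
        min_le_min_left _ (le_add_of_nonneg_right (hx p))
    _ = min (cumulative x p - x p) s + x p := by rw [← min_add_add_right, sub_add_cancel]

lemma massBelow_zero {x : P → ℝ} (hx : ∀ p, 0 ≤ x p) : massBelow x 0 = 0 := by
  ext p
  have := le_cumulative hx p
  rw [massBelow, min_eq_right (by linarith [hx p]), min_eq_right (by linarith), sub_self,
    Pi.zero_apply]

lemma massBelow_of_sum_le {x : P → ℝ} (hx : ∀ p, 0 ≤ x p) {s : ℝ} (hs : ∑ p, x p ≤ s) :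
    massBelow x s = x := by
  ext p
  have := cumulative_le_sum hx p
  rw [massBelow, min_eq_left (by linarith), min_eq_left (by linarith [hx p]), sub_sub_cancel]

lemma sub_lt_of_massBelow_ne_zero {x : P → ℝ} (hx : ∀ p, 0 ≤ x p) {s : ℝ} {p : P}
    (h : massBelow x s p ≠ 0) : cumulative x p - x p < s := by
  contrapose! h
  rw [massBelow, min_eq_right h, min_eq_right (by linarith [hx p]), sub_self]

lemma lt_of_massBelow_ne_self {x : P → ℝ} (hx : ∀ p, 0 ≤ x p) {s : ℝ} {p : P}
    (h : massBelow x s p ≠ x p) : s < cumulative x p := by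
  contrapose! h
  rw [massBelow, min_eq_left h, min_eq_left (by linarith [hx p]), sub_sub_cancel]

lemma continuous_massBelow : Continuous fun sx : ℝ × (P → ℝ) => massBelow sx.2 sx.1 := by
  unfold massBelow cumulative
  fun_prop

noncomputable def splitPushforward (a b : P → Q) (x : P → ℝ) (s : ℝ) : Q → ℝ :=
  pushforward a (massBelow x s) + pushforward b (x - massBelow x s)

lemma splitPushforward_nonneg (a b : P → Q) {x : P → ℝ} (hx : ∀ p, 0 ≤ x p) (s : ℝ) (q : Q) :
    0 ≤ splitPushforward a b x s q :=
  add_nonneg (pushforward_nonneg a (massBelow_nonneg hx s) q)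
    (pushforward_nonneg b (sub_nonneg.mpr (massBelow_le hx s)) q)

lemma sum_splitPushforward [Fintype Q] (a b : P → Q) (x : P → ℝ) (s : ℝ) :
    ∑ q, splitPushforward a b x s q = ∑ p, x p := by
  simp only [splitPushforward, Pi.add_apply, sum_add_distrib, sum_pushforward, Pi.sub_apply,
    sum_sub_distrib, add_sub_cancel]

lemma splitPushforward_zero (a b : P → Q) {x : P → ℝ} (hx : ∀ p, 0 ≤ x p) :
    splitPushforward a b x 0 = pushforward b x := by
  rw [splitPushforward, massBelow_zero hx, pushforward_zero, sub_zero, zero_add]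

lemma splitPushforward_of_sum_le (a b : P → Q) {x : P → ℝ} (hx : ∀ p, 0 ≤ x p) {s : ℝ}
    (hs : ∑ p, x p ≤ s) : splitPushforward a b x s = pushforward a x := by
  rw [splitPushforward, massBelow_of_sum_le hx hs, sub_self, pushforward_zero, add_zero]

lemma continuous_splitPushforward (a b : P → Q) :
    Continuous fun sx : ℝ × (P → ℝ) => splitPushforward a b sx.2 sx.1 :=
  ((continuous_pushforward a).comp continuous_massBelow).add
    ((continuous_pushforward b).comp (continuous_snd.sub continuous_massBelow))

lemma isChain_support_splitPushforward [Preorder Q] {a b : P →o Q} (hab : a ≤ b) {x : P → ℝ}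
    (hx : ∀ p, 0 ≤ x p) (hc : IsChain (· ≤ ·) (support x)) (s : ℝ) :
    IsChain (· ≤ ·) (support (splitPushforward a b x s)) := by
  have hbelow : support (massBelow x s) ⊆ support x := support_subset_iff'.mpr fun p hp =>
    le_antisymm ((massBelow_le hx s p).trans_eq (notMem_support.mp hp)) (massBelow_nonneg hx s p)
  have habove : support (x - massBelow x s) ⊆ support x := support_subset_iff'.mpr fun p hp => by
    rw [Pi.sub_apply, notMem_support.mp hp, notMem_support.mp (hbelow.mt hp), sub_zero]
  refine isChain_support_pushforward_add a.monotone b.monotone (hc.mono hbelow) (hc.mono habove)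
    fun p hp p' hp' => ?_
  have hps : cumulative x p - x p < s := sub_lt_of_massBelow_ne_zero hx hp
  have hsp' : s < cumulative x p' := lt_of_massBelow_ne_self hx (sub_ne_zero.mp hp').symm
  rcases eq_or_ne p p' with rfl | hne
  · exact hab p
  rcases hc (hbelow hp) (habove hp') hne with h | h
  · exact (a.monotone h).trans (hab p')
  · linarith [cumulative_le_sub_of_lt hx (h.lt_of_ne hne.symm)]

variable [Fintype Q] [PartialOrder Q]

noncomputable def map (a : P →o Q) : C(GeomReal P, GeomReal Q) where
  toFun x := ⟨pushforward a x.1, pushforward_nonneg a (x := x.1) x.2.1,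
    (sum_pushforward a x.1).trans x.2.2.1, isChain_support_pushforward a.monotone x.2.2.2⟩
  continuous_toFun := ((continuous_pushforward a).comp continuous_subtype_val).subtype_mk _

lemma map_comp [Fintype R] [PartialOrder R] (a : P →o Q) (b : Q →o R) :
    map (b.comp a) = (map b).comp (map a) :=
  ContinuousMap.ext fun x => Subtype.ext (pushforward_pushforward a b x.1).symm

lemma map_id : map (OrderHom.id : P →o P) = ContinuousMap.id _ :=
  ContinuousMap.ext fun x => Subtype.ext (pushforward_id x.1)

noncomputable def homotopyOfLE {a b : P →o Q} (hab : a ≤ b) :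
    ContinuousMap.Homotopy (map b) (map a) where
  toFun tx := ⟨splitPushforward a b tx.2.1 tx.1, splitPushforward_nonneg a b tx.2.2.1 tx.1,
    (sum_splitPushforward a b _ _).trans tx.2.2.2.1,
    isChain_support_splitPushforward hab tx.2.2.1 tx.2.2.2.2 tx.1⟩
  continuous_toFun := ((continuous_splitPushforward a b).comp
    (continuous_subtype_val.prodMap continuous_subtype_val)).subtype_mk _
  map_zero_left x := Subtype.ext (splitPushforward_zero a b x.2.1)
  map_one_left x := Subtype.ext (splitPushforward_of_sum_le a b x.2.1 x.2.2.1.le)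

lemma map_homotopic_of_le {a b : P →o Q} (hab : a ≤ b) : (map a).Homotopic (map b) :=
  ⟨(homotopyOfLE hab).symm⟩

open ContinuousMap in
noncomputable def homotopyEquivOfRetraction (r : P →o Q) (i : Q →o P)
    (hri : r.comp i = OrderHom.id) (hir : i.comp r ≤ OrderHom.id ∨ OrderHom.id ≤ i.comp r) :
    GeomReal P ≃ₕ GeomReal Q where
  toFun := map r
  invFun := map i
  left_inv := by
    rw [← map_comp, ← map_id]
    rcases hir with h | h
    exacts [map_homotopic_of_le h, (map_homotopic_of_le h).symm]
  right_inv := by rw [← map_comp, hri, map_id]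

end GeomReal

namespace Function

variable {α : Type*} [Finite α] [PartialOrder α] {f : α → α}

theorem exists_isFixedPt_iterate_of_id_le (hf : id ≤ f) : ∃ n, ∀ x, IsFixedPt f (f^[n] x) := by
  obtain ⟨n, hn⟩ :=
    WellFoundedGT.monotone_chain_condition ⟨fun m => f^[m], monotone_iterate_of_id_le hf⟩
  refine ⟨n, fun x => ?_⟩
  rw [IsFixedPt, ← iterate_succ_apply' f n x]
  exact (congrFun (hn (n + 1) n.le_succ) x).symm

theorem exists_isFixedPt_iterate_of_le_id (hf : f ≤ id) : ∃ n, ∀ x, IsFixedPt f (f^[n] x) :=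
  exists_isFixedPt_iterate_of_id_le (α := αᵒᵈ) hf

end Function

/-- A monotone (increasing or decreasing) order-preserving self-map of a finite
poset induces a homotopy equivalence between `|P|` and `|fix f|`. -/
theorem homotopyEquiv_fixedPoints {P : Type} [Fintype P] [PartialOrder P]
    (f : P → P) (hf : Monotone f)
    (hmono : (∀ p, p ≤ f p) ∨ (∀ p, f p ≤ p)) :
    Nonempty (ContinuousMap.HomotopyEquiv (GeomReal P) (GeomReal {p : P // f p = p})) := by
  obtain ⟨n, hn⟩ : ∃ n, ∀ p, IsFixedPt f (f^[n] p) :=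
    hmono.elim exists_isFixedPt_iterate_of_id_le exists_isFixedPt_iterate_of_le_id
  let r : P →o {p : P // f p = p} := ⟨fun p => ⟨f^[n] p, hn p⟩, fun _ _ h => hf.iterate n h⟩
  refine ⟨GeomReal.homotopyEquivOfRetraction r (OrderHom.Subtype.val _) ?_ ?_⟩
  · ext y
    exact iterate_fixed y.2 n
  · rcases hmono with h | h
    · exact Or.inr (id_le_iterate_of_id_le h n)
    · exact Or.inl (iterate_le_id_of_le_id h n)
end

section
/- Let A, B, C, D be topes on a finite type E. If A ≤_B C and C ≤_B D (that is, S(B,A) ⊆ S(B,C) and S(B,C) ⊆ S(B,D)), then C ≤_A D (that is, S(A,C) ⊆ S(A,D)). -/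
/-- The separation set `S(X,Y)` of two sign vectors. -/
def SepSet {E : Type*} (X Y : E → SignType) : Set E := {e | X e = -(Y e) ∧ X e ≠ 0}

/-- A tope is a sign vector with full support. -/
def IsTope {E : Type*} (X : E → SignType) : Prop := ∀ e, X e ≠ 0

section SepSet

variable {E : Type*} {X Y Z : E → SignType} {e : E}

theorem mem_sepSet_iff_of_apply_eq (h : X e = Y e) : e ∈ SepSet X Z ↔ e ∈ SepSet Y Z := by
  simp only [SepSet, Set.mem_ofPred_eq, h]

theorem eq_of_notMem_sepSet (hX : X e ≠ 0) (hY : Y e ≠ 0) (h : e ∉ SepSet X Y) : X e = Y e := by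
  simp only [SepSet, Set.mem_ofPred_eq, not_and] at h
  cases hx : X e <;> cases hy : Y e <;> simp_all

/-- `Z` separated from both `X` and `Y` at `e` would force `X e = Y e`, impossible when `X e = -(Y e) ≠ 0`. -/
theorem notMem_sepSet_of_mem_sepSet (hXY : e ∈ SepSet X Y) (hZX : e ∈ SepSet Z X) :
    e ∉ SepSet Z Y := by
  rintro ⟨hZY, -⟩
  obtain ⟨hXY, hX⟩ := hXY
  obtain ⟨hZX, -⟩ := hZX
  cases hx : X e <;> cases hy : Y e <;> simp_all

end SepSet

theorem tope_le_base_change_general {E : Type*} (A B C D : E → SignType)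
    (hB : IsTope B)
    (h1 : SepSet B A ⊆ SepSet B C) (h2 : SepSet B C ⊆ SepSet B D) :
    SepSet A C ⊆ SepSet A D := by
  intro e he
  have hBA : e ∉ SepSet B A := fun hBA => notMem_sepSet_of_mem_sepSet he hBA (h1 hBA)
  have hBe : B e = A e := eq_of_notMem_sepSet (hB e) he.2 hBA
  have hBC : e ∈ SepSet B C := (mem_sepSet_iff_of_apply_eq hBe).2 he
  exact (mem_sepSet_iff_of_apply_eq hBe).1 (h2 hBC)

/-- If `A ≤_B C` and `C ≤_B D`, then `C ≤_A D`. -/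
theorem tope_le_base_change {E : Type*} [Fintype E] (A B C D : E → SignType)
    (hA : IsTope A) (hB : IsTope B) (hC : IsTope C) (hD : IsTope D)
    (h1 : SepSet B A ⊆ SepSet B C) (h2 : SepSet B C ⊆ SepSet B D) :
    SepSet A C ⊆ SepSet A D :=
  tope_le_base_change_general A B C D hB h1 h2
end

section
/- Let T, R, T′, R′, T″, R″ be topes on a finite type E. If (T,R) ≼ (T′,R′) and (T′,R′) ≼ (T″,R″), then (T,R) ≼ (T″,R″); that is, the relation ≼ on ordered pairs of topes is transitive. -/
/-- A tope on `E`: a sign vector with full support. -/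
abbrev Tope (E : Type*) : Type _ := { X : E → SignType // ∀ e, X e ≠ 0 }

instance {E : Type*} : Neg (Tope E) :=
  ⟨fun X => ⟨-X.1, fun e h => X.2 e (by revert h; cases hx : X.1 e <;> simp [hx])⟩⟩

/-- The order relation of the tope-pair poset `Q`:
`(T,R) ≼ (T′,R′)` iff `S(T′,T) ⊆ S(T′,R)` and `S(T′,R) ⊆ S(T′,R′)`. -/
def QLE {E : Type*} (p q : Tope E × Tope E) : Prop :=
  SepSet q.1.1 p.1.1 ⊆ SepSet q.1.1 p.2.1 ∧ SepSet q.1.1 p.2.1 ⊆ SepSet q.1.1 q.2.1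

/-!
Topes take only the values `±1`, so two topes are separated exactly where they differ, and `≼`
becomes a pair of pointwise implications between equalities of coordinates. The second half of
the conclusion is then a chain of these implications. For the first half, at a coordinate where
`T″ = R`: if `T′ = T″` the hypotheses give `T″ = T` directly; otherwise `T″ ≠ R′` (as `T″ = R′`
forces `T″ = T′`), so `T′ = R′` because only two values are available, whence `T′ = R = T″`,
a contradiction.
-/

namespace Tope

variable {E : Type*}

theorem mem_sepSet_iff {X Y : Tope E} {e : E} : e ∈ SepSet X.1 Y.1 ↔ X.1 e ≠ Y.1 e := by
  have hX := X.2 e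
  have hY := Y.2 e
  simp only [SepSet, Set.mem_ofPred_eq]
  cases hx : X.1 e <;> cases hy : Y.1 e <;> simp_all

theorem eq_of_ne_of_ne {X Y Z : Tope E} {e : E} (hXY : X.1 e ≠ Y.1 e) (hYZ : Y.1 e ≠ Z.1 e) :
    X.1 e = Z.1 e := by
  have hX := X.2 e
  have hY := Y.2 e
  have hZ := Z.2 e
  cases hx : X.1 e <;> cases hy : Y.1 e <;> cases hz : Z.1 e <;> simp_all

theorem qle_iff {p q : Tope E × Tope E} :
    QLE p q ↔ ∀ e, (q.1.1 e = p.2.1 e → q.1.1 e = p.1.1 e) ∧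
      (q.1.1 e = q.2.1 e → q.1.1 e = p.2.1 e) := by
  simp only [QLE, Set.subset_def, mem_sepSet_iff, ← forall_and, not_imp_not]

end Tope

open Tope in
theorem qle_trans_general {E : Type*} (T R T' R' T'' R'' : Tope E)
    (h1 : QLE (T, R) (T', R')) (h2 : QLE (T', R') (T'', R'')) :
    QLE (T, R) (T'', R'') := by
  rw [qle_iff] at h1 h2 ⊢
  intro e
  obtain ⟨hT'R, hT'R'⟩ := h1 e
  obtain ⟨hT''R', hT''R''⟩ := h2 e
  dsimp only at *
  refine ⟨fun hR => ?_, fun hR'' => ?_⟩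
  · by_cases hT' : T'.1 e = T''.1 e
    · rw [← hT'] at hR ⊢
      exact hT'R hR
    · have hR' : T''.1 e ≠ R'.1 e := fun h => hT' (hT''R' h).symm
      exact absurd ((hT'R' (eq_of_ne_of_ne hT' hR')).trans hR.symm) hT'
  · have hR' : T''.1 e = R'.1 e := hT''R'' hR''
    have hT' : T''.1 e = T'.1 e := hT''R' hR'
    rw [hT', hT'R' (hT'.symm.trans hR')]

/-- The relation `≼` on ordered pairs of topes is transitive. -/
theorem qle_trans {E : Type*} [Fintype E] (T R T' R' T'' R'' : Tope E)
    (h1 : QLE (T, R) (T', R')) (h2 : QLE (T', R') (T'', R'')) :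
    QLE (T, R) (T'', R'') :=
  qle_trans_general T R T' R' T'' R'' h1 h2
end

section
/- Assume the finite type E is nonempty. Then for every ordered pair (R,T) of topes on E and every k ∈ {1,2,3}, ρᵏ(R,T) ≠ (R,T); moreover, for every nonempty finite ≼-chain σ of pairs of topes and every k ∈ {1,2,3}, the image set ρᵏ(σ) is not equal to σ. Hence the ℤ/4ℤ-action generated by ρ on the order complex of the tope-pair poset is free. -/
/-- The map `ρ(R,T) = (-T,R)`. -/
def rho {E : Type*} (p : Tope E × Tope E) : Tope E × Tope E := (-p.2, p.1)

/-!
Since `ρ⁴ = id`, invariance under `ρ` or `ρ³` implies invariance under `ρ²`, and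
`ρ²(R,T) = (-R,-T)`. A tope differs from its negative as soon as `E` is nonempty, so `ρ²` has
no fixed pair. Moreover `(R,T)` and `(-R,-T)` are incomparable: `S(-R,R)` is all of `E`, while
`S(-R,T)` and `S(-R,-T)` are disjoint. So a nonempty chain cannot be closed under `ρ²`.
-/

namespace Tope

variable {E : Type*}

@[simp]
lemma neg_neg (X : Tope E) : -(-X) = X :=
  Subtype.ext (_root_.neg_neg X.1)

lemma ne_neg [Nonempty E] (X : Tope E) : X ≠ -X := by
  intro h
  obtain ⟨e⟩ := ‹Nonempty E›
  have hXe : X.1 e = -X.1 e := congrFun (congrArg Subtype.val h) e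
  exact X.2 e (by revert hXe; cases X.1 e <;> decide)

lemma sepSet_neg_self (X : Tope E) : SepSet (-X).1 X.1 = Set.univ :=
  Set.eq_univ_of_forall fun e => ⟨rfl, (-X).2 e⟩

end Tope

lemma sepSet_disjoint_sepSet_neg {E : Type*} (X Y : E → SignType) :
    Disjoint (SepSet X Y) (SepSet X (-Y)) := by
  refine Set.disjoint_left.mpr fun e ⟨hY, hX⟩ ⟨hnegY, _⟩ => hX ?_
  simp only [Pi.neg_apply, _root_.neg_neg] at hnegY
  revert hY hnegY
  cases X e <;> cases Y e <;> decide

lemma not_QLE_neg {E : Type*} [Nonempty E] (A B : Tope E) : ¬ QLE (A, B) (-A, -B) := by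
  rintro ⟨hAB, hBnegB⟩
  obtain ⟨e⟩ := ‹Nonempty E›
  have he : e ∈ SepSet (-A).1 A.1 := by simp only [Tope.sepSet_neg_self, Set.mem_univ]
  exact Set.disjoint_left.mp (sepSet_disjoint_sepSet_neg _ B.1) (hAB he) (hBnegB (hAB he))

lemma Finset.image_iterate_eq_self {α : Type*} [DecidableEq α] {f : α → α} {s : Finset α}
    (h : s.image f = s) (n : ℕ) : s.image f^[n] = s := by
  apply Finset.coe_injective
  rw [Finset.coe_image, Set.image_iterate_eq]
  exact Function.iterate_fixed (by rw [← Finset.coe_image, h]) n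

section Rho

variable {E : Type*}

lemma rho_iterate_two (p : Tope E × Tope E) : rho^[2] p = (-p.1, -p.2) := rfl

lemma rho_iterate_four : (rho^[4] : Tope E × Tope E → Tope E × Tope E) = id :=
  funext fun p => Prod.ext (Tope.neg_neg p.1) (Tope.neg_neg p.2)

lemma exists_iterate_rho_iterate_eq_rho_iterate_two (k : ℕ) (hk : k ∈ ({1, 2, 3} : Finset ℕ)) :
    ∃ m, (rho^[k])^[m] = (rho^[2] : Tope E × Tope E → Tope E × Tope E) := by
  simp only [Finset.mem_insert, Finset.mem_singleton] at hk
  rcases hk with rfl | rfl | rfl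
  · exact ⟨2, rfl⟩
  · exact ⟨1, rfl⟩
  · refine ⟨2, ?_⟩
    rw [← Function.iterate_mul, show 3 * 2 = 2 + 4 from rfl, Function.iterate_add,
      rho_iterate_four, Function.comp_id]

variable [Nonempty E]

lemma rho_iterate_two_ne_self (p : Tope E × Tope E) : rho^[2] p ≠ p :=
  fun h => Tope.ne_neg p.1 (congrArg Prod.fst h).symm

lemma not_QLE_rho_iterate_two (p : Tope E × Tope E) : ¬ QLE p (rho^[2] p) :=
  not_QLE_neg p.1 p.2

lemma not_QLE_rho_iterate_two_left (p : Tope E × Tope E) : ¬ QLE (rho^[2] p) p := by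
  simpa only [rho_iterate_two, Tope.neg_neg, Prod.mk.eta] using
    not_QLE_rho_iterate_two (rho^[2] p)

lemma image_rho_iterate_two_ne_self_of_isChain [DecidableEq (Tope E × Tope E)]
    {s : Finset (Tope E × Tope E)} (hs : s.Nonempty)
    (hc : IsChain QLE (s : Set (Tope E × Tope E))) : s.image rho^[2] ≠ s := by
  intro h
  obtain ⟨p, hp⟩ := hs
  have hp' : rho^[2] p ∈ s := h ▸ Finset.mem_image_of_mem _ hp
  rcases hc hp hp' (rho_iterate_two_ne_self p).symm with hle | hle
  · exact not_QLE_rho_iterate_two p hle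
  · exact not_QLE_rho_iterate_two_left p hle

end Rho

/-- If `E` is nonempty, no pair of topes is fixed by `ρ`, `ρ²` or `ρ³`, and no
nonempty finite `≼`-chain is invariant under `ρ`, `ρ²` or `ρ³`: the
`ℤ/4ℤ`-action generated by `ρ` on the order complex of `Q` is free. -/
theorem rho_action_free (E : Type*) [Fintype E] [DecidableEq E] [Nonempty E] :
    (∀ p : Tope E × Tope E, ∀ k ∈ ({1, 2, 3} : Finset ℕ), rho^[k] p ≠ p) ∧
    (∀ s : Finset (Tope E × Tope E), s.Nonempty → IsChain QLE (s : Set (Tope E × Tope E)) →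
      ∀ k ∈ ({1, 2, 3} : Finset ℕ), s.image (rho^[k]) ≠ s) := by
  refine ⟨fun p k hk hp => ?_, fun s hs hc k hk h => ?_⟩
  · obtain ⟨m, hm⟩ := exists_iterate_rho_iterate_eq_rho_iterate_two (E := E) k hk
    exact rho_iterate_two_ne_self p (hm ▸ Function.iterate_fixed hp m)
  · obtain ⟨m, hm⟩ := exists_iterate_rho_iterate_eq_rho_iterate_two (E := E) k hk
    exact image_rho_iterate_two_ne_self_of_isChain hs hc
      (hm ▸ Finset.image_iterate_eq_self h m)
end
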